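/- Every optimal set of two-means for the condensation measure P equals {13/60, 47/60}, and the second quantization error of P is V_2(P) = 8003/262800. -/

import Mathlib

open MeasureTheory Metric Set Filter

/-- The distortion error of a set `α` of quantizer points for `μ`, of order 2:
`∫ min_{a ∈ α} (x - a)^2 dμ(x)`. -/
noncomputable def distortion (μ : MeasureTheory.Measure ℝ) (α : Set ℝ) : ℝ :=
  ∫ x, (Metric.infDist x α) ^ 2 ∂μ

/-- The `n`th quantization error of order 2 for `μ`. -/
noncomputable def quantErr (μ : MeasureTheory.Measure ℝ) (n : ℕ) : ℝ :=
  sInf {e : ℝ | ∃ α : Set ℝ, α.Finite ∧ α.Nonempty ∧ α.ncard ≤ n ∧ e = distortion μ α}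

/-- `α` is an optimal set of `n`-means for `μ`. -/
def IsOptimalSet (μ : MeasureTheory.Measure ℝ) (n : ℕ) (α : Set ℝ) : Prop :=
  α.Finite ∧ α.Nonempty ∧ α.ncard ≤ n ∧ distortion μ α = quantErr μ n

/-- The similarity `S₁(x) = x/5`. -/
noncomputable def S1 : ℝ → ℝ := fun x => x / 5

/-- The similarity `S₂(x) = x/5 + 4/5`. -/
noncomputable def S2 : ℝ → ℝ := fun x => x / 5 + 4 / 5

/-- `P` is the condensation measure associated with `(S₁, S₂; 1/3, 1/3, 1/3; ν)`:
`P = (1/3) P∘S₁⁻¹ + (1/3) P∘S₂⁻¹ + (1/3) ν`. -/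
def IsCondensation (P ν : MeasureTheory.Measure ℝ) : Prop :=
  MeasureTheory.IsProbabilityMeasure P ∧
    P = (1 / 3 : ENNReal) • P.map S1 + (1 / 3 : ENNReal) • P.map S2 + (1 / 3 : ENNReal) • ν

/-- The uniform distribution on `[2/5, 3/5]`, i.e. the measure with density
`5 · 1_{[2/5, 3/5]}` with respect to Lebesgue measure. -/
noncomputable def nuUnif : MeasureTheory.Measure ℝ :=
  (5 : ENNReal) • (MeasureTheory.volume.restrict (Set.Icc (2 / 5 : ℝ) (3 / 5)))

/-!
The distance from `x` to a pair `{a, b}` with midpoint `m` and half-width `d` is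
`||x - m| - d|`, so the distortion of the pair splits as
`Var_P |x - m| + (d - E_P |x - m|)²`. The best half-width is therefore `E_P |x - m|`, and it
remains to minimise `m ↦ Var_P |x - m|`. The condensation equation gives `E_P x = 1/2`,
`E_P x² = 79/219`, and expresses `E_P |x - m|` through its values at `5m` and `5m - 4`; these
lie outside `[0, 1]`, where the mean absolute deviation is explicit, unless `m` is within `1/5`
of an endpoint, where a crude bound suffices. A case analysis shows that the variance is
minimal exactly at `m = 1/2`, with `E_P |x - 1/2| = 17/60`.
-/

open ProbabilityTheory

lemma infDist_pair (a b x : ℝ) :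
    infDist x {a, b} = |(|x - (a + b) / 2| - |a - b| / 2)| := by
  obtain ⟨y, hy, hxy⟩ := (isCompact_singleton.insert a).exists_infDist_eq_dist
    (insert_nonempty a {b}) x
  have hmin : infDist x {a, b} = min |x - a| |x - b| := by
    refine le_antisymm (le_min ?_ ?_) ?_
    · exact infDist_le_dist_of_mem (mem_insert a {b})
    · exact infDist_le_dist_of_mem (mem_insert_of_mem a rfl)
    · rcases hy with rfl | rfl
      · exact hxy ▸ min_le_left _ _
      · exact hxy ▸ min_le_right _ _
  rw [hmin]
  grind

lemma integral_sub_const_sq {Ω : Type*} [MeasurableSpace Ω] {μ : Measure Ω}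
    [IsProbabilityMeasure μ] {Y : Ω → ℝ} (hY : MemLp Y 2 μ) (d : ℝ) :
    ∫ ω, (Y ω - d) ^ 2 ∂μ = Var[Y; μ] + (d - ∫ ω, Y ω ∂μ) ^ 2 := by
  have hY1 : Integrable Y μ := hY.integrable one_le_two
  have hexp : ∀ ω, (Y ω - d) ^ 2 = Y ω ^ 2 - 2 * d * Y ω + d ^ 2 := fun ω => by ring
  simp only [hexp]
  rw [variance_eq_sub hY, integral_add ?_ (integrable_const _),
    integral_sub hY.integrable_sq (hY1.const_mul _), integral_const_mul, integral_const]
  · simp only [Pi.pow_apply, probReal_univ, smul_eq_mul, one_mul]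
    ring
  · exact hY.integrable_sq.sub (hY1.const_mul _)

theorem distortion_pair {μ : Measure ℝ} [IsProbabilityMeasure μ] (hμ : MemLp id 2 μ)
    (a b : ℝ) :
    distortion μ {a, b} = Var[fun x => |x - (a + b) / 2|; μ] +
      (|a - b| / 2 - ∫ x, |x - (a + b) / 2| ∂μ) ^ 2 := by
  have hY : MemLp (fun x => |x - (a + b) / 2|) 2 μ := (hμ.sub (memLp_const _)).norm
  simp only [distortion, infDist_pair, sq_abs]
  exact integral_sub_const_sq hY _

lemma exists_eq_pair_of_ncard_le_two {X : Type*} {α : Set X} (hfin : α.Finite)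
    (hne : α.Nonempty) (hcard : α.ncard ≤ 2) : ∃ a b : X, α = {a, b} := by
  obtain h | h : α.ncard = 1 ∨ α.ncard = 2 := by
    have := (ncard_pos hfin).2 hne
    omega
  · obtain ⟨a, rfl⟩ := ncard_eq_one.1 h
    exact ⟨a, a, (pair_eq_singleton a).symm⟩
  · obtain ⟨a, b, -, rfl⟩ := ncard_eq_two.1 h
    exact ⟨a, b, rfl⟩

lemma quantErr_two_eq {μ : Measure ℝ} {t : ℝ} (hle : ∀ a b : ℝ, t ≤ distortion μ {a, b})
    {a₀ b₀ : ℝ} (h₀ : distortion μ {a₀, b₀} = t) : quantErr μ 2 = t := by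
  have hmem : t ∈ {e : ℝ | ∃ α : Set ℝ, α.Finite ∧ α.Nonempty ∧ α.ncard ≤ 2 ∧
      e = distortion μ α} :=
    ⟨{a₀, b₀}, toFinite _, insert_nonempty _ _,
      (ncard_insert_le a₀ {b₀}).trans (by rw [ncard_singleton]), h₀.symm⟩
  refine le_antisymm (csInf_le ⟨t, ?_⟩ hmem) (le_csInf ⟨t, hmem⟩ ?_) <;>
  · rintro e ⟨α, hfin, hne, hcard, rfl⟩
    obtain ⟨a, b, rfl⟩ := exists_eq_pair_of_ncard_le_two hfin hne hcard
    exact hle a b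

lemma integrable_of_ae_mem_Icc {μ : Measure ℝ} [IsFiniteMeasure μ] {a b : ℝ}
    (hμ : ∀ᵐ x ∂μ, x ∈ Icc a b) {f : ℝ → ℝ} (hf : Continuous f) : Integrable f μ := by
  rw [← Measure.restrict_eq_self_of_ae_mem hμ]
  exact hf.integrableOn_Icc

lemma integral_abs_sub_of_ae_le {μ : Measure ℝ} [IsProbabilityMeasure μ]
    (hμ : Integrable (fun x => x) μ) {c : ℝ} (h : ∀ᵐ x ∂μ, c ≤ x) :
    ∫ x, |x - c| ∂μ = ∫ x, x ∂μ - c := by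
  rw [integral_congr_ae (h.mono fun x hx => abs_of_nonneg (sub_nonneg.2 hx)),
    integral_sub hμ (integrable_const c), integral_const]
  simp

lemma integral_abs_sub_of_ae_ge {μ : Measure ℝ} [IsProbabilityMeasure μ]
    (hμ : Integrable (fun x => x) μ) {c : ℝ} (h : ∀ᵐ x ∂μ, x ≤ c) :
    ∫ x, |x - c| ∂μ = c - ∫ x, x ∂μ := by
  rw [integral_congr_ae (h.mono fun x hx => abs_sub_comm x c ▸ abs_of_nonneg (sub_nonneg.2 hx)),
    integral_sub (integrable_const c) hμ, integral_const]
  simp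

lemma intervalIntegral_abs_sub {a b c : ℝ} (hac : a ≤ c) (hcb : c ≤ b) :
    ∫ x in a..b, |x - c| = ((c - a) ^ 2 + (b - c) ^ 2) / 2 := by
  have hint : ∀ u v : ℝ, IntervalIntegrable (fun x => |x - c|) volume u v := fun u v =>
    (continuous_abs.comp (continuous_sub_right c)).intervalIntegrable u v
  have hleft : ∫ x in a..c, |x - c| = ∫ x in a..c, (c - x) :=
    intervalIntegral.integral_congr fun x hx => by
      rw [uIcc_of_le hac] at hx
      exact (abs_of_nonpos (sub_nonpos.2 hx.2)).trans (neg_sub x c)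
  have hright : ∫ x in c..b, |x - c| = ∫ x in c..b, (x - c) :=
    intervalIntegral.integral_congr fun x hx => by
      rw [uIcc_of_le hcb] at hx
      exact abs_of_nonneg (sub_nonneg.2 hx.1)
  rw [← intervalIntegral.integral_add_adjacent_intervals (hint a c) (hint c b), hleft, hright,
    intervalIntegral.integral_sub intervalIntegrable_const intervalIntegral.intervalIntegrable_id,
    intervalIntegral.integral_sub intervalIntegral.intervalIntegrable_id intervalIntegrable_const]
  simp only [integral_id, intervalIntegral.integral_const, smul_eq_mul]
  ring

lemma measurable_S1 : Measurable S1 := by unfold S1; fun_prop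

lemma measurable_S2 : Measurable S2 := by unfold S2; fun_prop

namespace IsCondensation

variable {P ν : Measure ℝ}

lemma ae_mem_Icc (hP : IsCondensation P ν) (hν : ∀ᵐ x ∂ν, x ∈ Icc (0 : ℝ) 1) :
    ∀ᵐ x ∂P, x ∈ Icc (0 : ℝ) 1 := by
  obtain ⟨hprob, hPeq⟩ := hP
  set s := (Icc (0 : ℝ) 1)ᶜ
  have hs : MeasurableSet s := measurableSet_Icc.compl
  have hPs : P s = 1 / 3 * P (S1 ⁻¹' s) + 1 / 3 * P (S2 ⁻¹' s) := by
    have hνs : ν s = 0 := ae_iff.1 hν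
    conv_lhs => rw [hPeq]
    simp [Measure.map_apply measurable_S1 hs, Measure.map_apply measurable_S2 hs, hνs]
  have hreal : P.real s = P.real (S1 ⁻¹' s) / 3 + P.real (S2 ⁻¹' s) / 3 := by
    simp only [measureReal_def, hPs]
    rw [ENNReal.toReal_add (by finiteness) (by finiteness)]
    simp only [one_div, ENNReal.toReal_mul, ENNReal.toReal_inv, ENNReal.toReal_ofNat]
    ring
  have h1 : P.real (S1 ⁻¹' s) ≤ P.real s := measureReal_mono fun x hx hx' =>
    hx ⟨by unfold S1; linarith [hx'.1], by unfold S1; linarith [hx'.2]⟩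
  have h2 : P.real (S2 ⁻¹' s) ≤ P.real s := measureReal_mono fun x hx hx' =>
    hx ⟨by unfold S2; linarith [hx'.1], by unfold S2; linarith [hx'.2]⟩
  have : P.real s = 0 := by linarith [measureReal_nonneg (μ := P) (s := s)]
  exact ae_iff.2 ((measureReal_eq_zero_iff).1 this)

lemma integral_eq (hP : IsCondensation P ν) {f : ℝ → ℝ} (hf : Integrable f P) :
    ∫ x, f x ∂P = (∫ x, f (S1 x) ∂P + ∫ x, f (S2 x) ∂P + ∫ x, f x ∂ν) / 3 := by
  obtain ⟨-, hPeq⟩ := hP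
  rw [hPeq] at hf
  obtain ⟨⟨h1, h2⟩, h3⟩ := by simpa only [integrable_add_measure] using hf
  have h13 : (1 / 3 : ENNReal) ≠ 0 := by norm_num
  have h13' : (1 / 3 : ENNReal) ≠ ⊤ := by norm_num
  conv_lhs => rw [hPeq]
  rw [integral_add_measure (h1.add_measure h2) h3, integral_add_measure h1 h2,
    integral_smul_measure, integral_smul_measure, integral_smul_measure,
    integral_map measurable_S1.aemeasurable
      ((integrable_smul_measure h13 h13').1 h1).aestronglyMeasurable,
    integral_map measurable_S2.aemeasurable
      ((integrable_smul_measure h13 h13').1 h2).aestronglyMeasurable]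
  simp only [one_div, ENNReal.toReal_inv, ENNReal.toReal_ofNat, smul_eq_mul]
  ring

end IsCondensation

instance : IsProbabilityMeasure nuUnif := by
  constructor
  rw [nuUnif, Measure.smul_apply, Measure.restrict_apply_univ, Real.volume_Icc,
    ← ENNReal.ofReal_ofNat, smul_eq_mul, ← ENNReal.ofReal_mul (by norm_num)]
  norm_num

lemma ae_mem_Icc_nuUnif : ∀ᵐ x ∂nuUnif, x ∈ Icc (2 / 5 : ℝ) (3 / 5) :=
  Measure.ae_smul_measure (ae_restrict_mem measurableSet_Icc) _

lemma integral_nuUnif (f : ℝ → ℝ) : ∫ x, f x ∂nuUnif = 5 * ∫ x in (2 / 5 : ℝ)..3 / 5, f x := by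
  rw [nuUnif, integral_smul_measure, intervalIntegral.integral_of_le (by norm_num),
    integral_Icc_eq_integral_Ioc]
  simp

lemma integral_id_nuUnif : ∫ x, x ∂nuUnif = 1 / 2 := by
  rw [integral_nuUnif, integral_id]
  norm_num

lemma integral_sq_nuUnif : ∫ x, x ^ 2 ∂nuUnif = 19 / 75 := by
  rw [integral_nuUnif, integral_pow]
  norm_num

lemma integral_abs_sub_nuUnif {c : ℝ} (h₁ : 2 / 5 ≤ c) (h₂ : c ≤ 3 / 5) :
    ∫ x, |x - c| ∂nuUnif = 5 * ((c - 2 / 5) ^ 2 + (3 / 5 - c) ^ 2) / 2 := by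
  rw [integral_nuUnif, intervalIntegral_abs_sub h₁ h₂]
  ring

lemma integral_abs_sub_nuUnif_of_le {c : ℝ} (hc : c ≤ 2 / 5) :
    ∫ x, |x - c| ∂nuUnif = 1 / 2 - c := by
  rw [integral_abs_sub_of_ae_le (integrable_of_ae_mem_Icc ae_mem_Icc_nuUnif continuous_id)
    (ae_mem_Icc_nuUnif.mono fun _ hx => hc.trans hx.1), integral_id_nuUnif]

lemma integral_abs_sub_nuUnif_of_ge {c : ℝ} (hc : 3 / 5 ≤ c) :
    ∫ x, |x - c| ∂nuUnif = c - 1 / 2 := by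
  rw [integral_abs_sub_of_ae_ge (integrable_of_ae_mem_Icc ae_mem_Icc_nuUnif continuous_id)
    (ae_mem_Icc_nuUnif.mono fun _ hx => hx.2.trans hc), integral_id_nuUnif]

namespace IsCondensation

variable {P : Measure ℝ} (hP : IsCondensation P nuUnif)
include hP

lemma ae_mem_Icc_zero_one : ∀ᵐ x ∂P, x ∈ Icc (0 : ℝ) 1 :=
  hP.ae_mem_Icc (ae_mem_Icc_nuUnif.mono fun _ hx => ⟨by linarith [hx.1], by linarith [hx.2]⟩)

lemma integrable {f : ℝ → ℝ} (hf : Continuous f) : Integrable f P :=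
  have := hP.1
  integrable_of_ae_mem_Icc hP.ae_mem_Icc_zero_one hf

lemma memLp_id : MemLp id 2 P :=
  have := hP.1
  memLp_of_bounded hP.ae_mem_Icc_zero_one aestronglyMeasurable_id 2

lemma integral_id : ∫ x, x ∂P = 1 / 2 := by
  have := hP.1
  have hid : Integrable (fun x : ℝ => x) P := hP.integrable continuous_id
  have h := hP.integral_eq hid
  simp only [S1, S2] at h
  rw [integral_div, integral_add (hid.div_const 5) (integrable_const _), integral_div,
    integral_id_nuUnif, integral_const] at h
  simp only [probReal_univ, smul_eq_mul, one_mul] at h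
  linarith

lemma integral_sq : ∫ x, x ^ 2 ∂P = 79 / 219 := by
  have := hP.1
  have hid : Integrable (fun x : ℝ => x) P := hP.integrable continuous_id
  have hsq : Integrable (fun x : ℝ => x ^ 2) P := hP.integrable (continuous_pow 2)
  have h1 : ∫ x, S1 x ^ 2 ∂P = (∫ x, x ^ 2 ∂P) / 25 := by
    simp only [S1, div_pow]
    norm_num [integral_div]
  have h2 : ∫ x, S2 x ^ 2 ∂P = (∫ x, x ^ 2 ∂P) / 25 + 8 / 25 * ∫ x, x ∂P + 16 / 25 := by
    have hexp : ∀ x : ℝ, S2 x ^ 2 = x ^ 2 / 25 + 8 / 25 * x + 16 / 25 := fun x => by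
      simp only [S2]; ring
    simp only [hexp]
    rw [integral_add ?_ (integrable_const _), integral_add (hsq.div_const 25) (hid.const_mul _),
      integral_div, integral_const_mul, integral_const]
    · simp
    · exact (hsq.div_const 25).add (hid.const_mul _)
  have h := hP.integral_eq hsq
  rw [h1, h2, hP.integral_id, integral_sq_nuUnif] at h
  linarith

lemma integral_abs_sub (c : ℝ) :
    ∫ x, |x - c| ∂P = ((∫ x, |x - 5 * c| ∂P) / 5 + (∫ x, |x - (5 * c - 4)| ∂P) / 5 +
      ∫ x, |x - c| ∂nuUnif) / 3 := by
  have hS1 : ∀ x, |S1 x - c| = |x - 5 * c| / 5 := fun x => by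
    rw [S1, show x / 5 - c = (x - 5 * c) / 5 by ring, abs_div,
      abs_of_pos (by norm_num : (0 : ℝ) < 5)]
  have hS2 : ∀ x, |S2 x - c| = |x - (5 * c - 4)| / 5 := fun x => by
    rw [S2, show x / 5 + 4 / 5 - c = (x - (5 * c - 4)) / 5 by ring, abs_div,
      abs_of_pos (by norm_num : (0 : ℝ) < 5)]
  rw [hP.integral_eq (hP.integrable (f := fun x => |x - c|) (by fun_prop))]
  simp only [hS1, hS2, integral_div]

lemma integral_abs_sub_of_nonpos {c : ℝ} (hc : c ≤ 0) : ∫ x, |x - c| ∂P = 1 / 2 - c := by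
  have := hP.1
  rw [integral_abs_sub_of_ae_le (hP.integrable continuous_id)
    (hP.ae_mem_Icc_zero_one.mono fun _ hx => hc.trans hx.1), hP.integral_id]

lemma integral_abs_sub_of_one_le {c : ℝ} (hc : 1 ≤ c) : ∫ x, |x - c| ∂P = c - 1 / 2 := by
  have := hP.1
  rw [integral_abs_sub_of_ae_ge (hP.integrable continuous_id)
    (hP.ae_mem_Icc_zero_one.mono fun _ hx => hx.2.trans hc), hP.integral_id]

lemma integral_abs_sub_le_one {c : ℝ} (h₀ : 0 ≤ c) (h₁ : c ≤ 1) : ∫ x, |x - c| ∂P ≤ 1 := by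
  have := hP.1
  have h := integral_mono_ae (hP.integrable (f := fun x => |x - c|) (by fun_prop))
    (integrable_const 1) (hP.ae_mem_Icc_zero_one.mono fun x hx =>
      abs_le.2 ⟨by linarith [hx.1], by linarith [hx.2]⟩)
  simpa using h

lemma integral_abs_sub_of_mem_Icc {c : ℝ} (h₀ : 1 / 5 ≤ c) (h₁ : c ≤ 4 / 5) :
    ∫ x, |x - c| ∂P = (4 / 5 + ∫ x, |x - c| ∂nuUnif) / 3 := by
  rw [hP.integral_abs_sub, hP.integral_abs_sub_of_one_le (by linarith),
    hP.integral_abs_sub_of_nonpos (by linarith)]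
  ring

lemma integral_abs_sub_le_of_le {c : ℝ} (h₀ : 0 ≤ c) (h₁ : c ≤ 1 / 5) :
    ∫ x, |x - c| ∂P ≤ (8 / 5 - 2 * c) / 3 := by
  rw [hP.integral_abs_sub, hP.integral_abs_sub_of_nonpos (c := 5 * c - 4) (by linarith),
    integral_abs_sub_nuUnif_of_le (by linarith)]
  linarith [hP.integral_abs_sub_le_one (c := 5 * c) (by linarith) (by linarith)]

lemma integral_abs_sub_le_of_ge {c : ℝ} (h₀ : 4 / 5 ≤ c) (h₁ : c ≤ 1) :
    ∫ x, |x - c| ∂P ≤ (2 * c - 2 / 5) / 3 := by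
  rw [hP.integral_abs_sub, hP.integral_abs_sub_of_one_le (c := 5 * c) (by linarith),
    integral_abs_sub_nuUnif_of_ge (by linarith)]
  linarith [hP.integral_abs_sub_le_one (c := 5 * c - 4) (by linarith) (by linarith)]

lemma variance_abs_sub (c : ℝ) :
    Var[fun x => |x - c|; P] = 79 / 219 - c + c ^ 2 - (∫ x, |x - c| ∂P) ^ 2 := by
  have := hP.1
  have hid : Integrable (fun x : ℝ => x) P := hP.integrable continuous_id
  have hsq : Integrable (fun x : ℝ => x ^ 2) P := hP.integrable (continuous_pow 2)
  have hexp : ∀ x : ℝ, |x - c| ^ 2 = x ^ 2 - 2 * c * x + c ^ 2 := fun x => by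
    rw [sq_abs]; ring
  have hY : MemLp (fun x => |x - c|) 2 P := (hP.memLp_id.sub (memLp_const c)).norm
  rw [variance_eq_sub hY]
  simp only [Pi.pow_apply, hexp]
  rw [integral_add ?_ (integrable_const _), integral_sub hsq (hid.const_mul _),
    integral_const_mul, integral_const, hP.integral_sq, hP.integral_id]
  · simp only [probReal_univ, smul_eq_mul, one_mul]
    ring
  · exact hsq.sub (hid.const_mul _)

lemma integral_abs_sub_half : ∫ x, |x - 1 / 2| ∂P = 17 / 60 := by
  rw [hP.integral_abs_sub_of_mem_Icc (by norm_num) (by norm_num),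
    integral_abs_sub_nuUnif (by norm_num) (by norm_num)]
  norm_num

lemma lt_variance_abs_sub {c : ℝ} (hc : c ≠ 1 / 2) :
    8003 / 262800 < Var[fun x => |x - c|; P] := by
  rw [hP.variance_abs_sub]
  have hL₀ : 0 ≤ ∫ x, |x - c| ∂P := integral_nonneg fun x => abs_nonneg _
  rcases le_or_gt c 0 with h₁ | h₁
  · rw [hP.integral_abs_sub_of_nonpos h₁]; nlinarith
  rcases le_or_gt c (1 / 5) with h₂ | h₂
  · have hL := hP.integral_abs_sub_le_of_le h₁.le h₂
    nlinarith [mul_self_le_mul_self hL₀ hL, sq_nonneg (c - 1 / 5)]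
  rcases le_or_gt c (2 / 5) with h₃ | h₃
  · rw [hP.integral_abs_sub_of_mem_Icc h₂.le (by linarith), integral_abs_sub_nuUnif_of_le h₃]
    nlinarith [sq_nonneg (c - 2 / 5)]
  rcases le_or_gt c (3 / 5) with h₄ | h₄
  · rw [hP.integral_abs_sub_of_mem_Icc (by linarith) (by linarith),
      integral_abs_sub_nuUnif h₃.le h₄]
    have ht : 0 < (c - 1 / 2) ^ 2 := by positivity
    have hsq : (c - 1 / 2) ^ 2 ≤ 1 / 100 := by nlinarith
    -- here the variance minus `8003/262800` is `u² (1/18 - 25 u²/9)` with `u = c - 1/2`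
    nlinarith [mul_pos ht (show (0 : ℝ) < 1 / 18 - 25 / 9 * (c - 1 / 2) ^ 2 by nlinarith)]
  rcases le_or_gt c (4 / 5) with h₅ | h₅
  · rw [hP.integral_abs_sub_of_mem_Icc (by linarith) h₅, integral_abs_sub_nuUnif_of_ge h₄.le]
    nlinarith [sq_nonneg (c - 3 / 5)]
  rcases le_or_gt c 1 with h₆ | h₆
  · have hL := hP.integral_abs_sub_le_of_ge h₅.le h₆
    nlinarith [mul_self_le_mul_self hL₀ hL, sq_nonneg (c - 4 / 5)]
  · rw [hP.integral_abs_sub_of_one_le h₆.le]; nlinarith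

lemma variance_abs_sub_half : Var[fun x => |x - 1 / 2|; P] = 8003 / 262800 := by
  rw [hP.variance_abs_sub, hP.integral_abs_sub_half]
  norm_num

lemma le_distortion_pair (a b : ℝ) : 8003 / 262800 ≤ distortion P {a, b} := by
  have := hP.1
  rw [distortion_pair hP.memLp_id]
  rcases eq_or_ne ((a + b) / 2) (1 / 2) with hm | hm
  · rw [hm, hP.variance_abs_sub_half]
    exact le_add_of_nonneg_right (sq_nonneg _)
  · exact (hP.lt_variance_abs_sub hm).le.trans (le_add_of_nonneg_right (sq_nonneg _))

lemma distortion_pair_eq_iff (a b : ℝ) :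
    distortion P {a, b} = 8003 / 262800 ↔ ({a, b} : Set ℝ) = {13 / 60, 47 / 60} := by
  have := hP.1
  refine ⟨fun h => ?_, fun h => ?_⟩
  · rw [distortion_pair hP.memLp_id] at h
    have hm : (a + b) / 2 = 1 / 2 := by
      by_contra hm
      linarith [hP.lt_variance_abs_sub hm, sq_nonneg (|a - b| / 2 - ∫ x, |x - (a + b) / 2| ∂P)]
    rw [hm, hP.variance_abs_sub_half, hP.integral_abs_sub_half, add_eq_left, sq_eq_zero_iff,
      sub_eq_zero] at h
    rcases abs_cases (a - b) with ⟨hab, -⟩ | ⟨hab, -⟩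
    · rw [show a = 47 / 60 by linarith, show b = 13 / 60 by linarith, pair_comm]
    · rw [show a = 13 / 60 by linarith, show b = 47 / 60 by linarith]
  · have hm : ((13 : ℝ) / 60 + 47 / 60) / 2 = 1 / 2 := by norm_num
    have hd : |(13 : ℝ) / 60 - 47 / 60| / 2 = 17 / 60 := by
      rw [abs_of_neg (by norm_num)]; norm_num
    rw [h, distortion_pair hP.memLp_id, hm, hd, hP.variance_abs_sub_half,
      hP.integral_abs_sub_half, sub_self, sq, mul_zero, add_zero]

end IsCondensation

theorem optimal_two_means_uniform (P : MeasureTheory.Measure ℝ)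
    (hP : IsCondensation P nuUnif) :
    (∀ α : Set ℝ, IsOptimalSet P 2 α → α = {13 / 60, 47 / 60}) ∧
      quantErr P 2 = 8003 / 262800 := by
  have hV : quantErr P 2 = 8003 / 262800 :=
    quantErr_two_eq hP.le_distortion_pair ((hP.distortion_pair_eq_iff _ _).2 rfl)
  refine ⟨fun α ⟨hfin, hne, hcard, hopt⟩ => ?_, hV⟩
  obtain ⟨a, b, rfl⟩ := exists_eq_pair_of_ncard_le_two hfin hne hcard
  exact (hP.distortion_pair_eq_iff a b).1 (hopt.trans hV)
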